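/- Let φ_α(D) = max_{q ∈ conv(Q)} [⟨q, P - D⟩ + αH(D)] be the regularized primal objective on Δ_k and ψ_α(q) = ⟨q, P⟩ - αH*(q/α) the dual objective on conv(Q), where Q ⊆ [-1,1]^k, α > 0, and H is the negative entropy with Fenchel conjugate H* = log-sum-exp. For any q_out ∈ conv(Q), set P_priv := ∇H*(q_out/α). Then φ_α(P_priv) - ψ_α(q_out) = ⟨q̃ - q_out, ∇ψ_α(q_out)⟩ ≤ max_{q ∈ conv(Q)} ⟨q - q_out, ∇ψ_α(q_out)⟩, where q̃ = argmax_{q ∈ conv(Q)} [⟨q, P - P_priv⟩] and ∇ψ_α(q) = P - ∇H*(q/α). -/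

import Mathlib

/-!
At `P_priv = softmax (q_out / α)` the Fenchel–Young inequality between the negative entropy and
log-sum-exp is an equality: `α H(P_priv) = ⟨q_out, P_priv⟩ - α log Σ exp (q_out / α)`. Substituting
this into `φ_α(P_priv) - ψ_α(q_out)`, the entropy and log-sum-exp terms cancel and what remains is
`⟨q̃, P - P_priv⟩ - ⟨q_out, P - P_priv⟩`. Since `q̃` maximises the linear functional
`⟨·, P - P_priv⟩` on `conv Q`, it also maximises `⟨· - q_out, P - P_priv⟩`, so the supremum on the
right is attained at `q̃`.
-/

open Real Finset

theorem csSup_image_eq_of_forall_le {α β : Type*} [ConditionallyCompleteLattice β]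
    {f : α → β} {s : Set α} {a : α} (ha : a ∈ s) (hmax : ∀ x ∈ s, f x ≤ f a) :
    sSup (f '' s) = f a :=
  IsGreatest.csSup_eq ⟨Set.mem_image_of_mem f ha, Set.forall_mem_image.2 hmax⟩

namespace Real

variable {ι : Type*} [Fintype ι]

noncomputable def softmax (x : ι → ℝ) (i : ι) : ℝ :=
  exp (x i) / ∑ j, exp (x j)

variable [Nonempty ι]

theorem sum_exp_pos (x : ι → ℝ) : 0 < ∑ j, exp (x j) :=
  Finset.sum_pos (fun j _ => exp_pos (x j)) univ_nonempty

theorem sum_softmax (x : ι → ℝ) : ∑ i, softmax x i = 1 := by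
  simp only [softmax, ← Finset.sum_div]
  exact div_self (sum_exp_pos x).ne'

theorem log_softmax (x : ι → ℝ) (i : ι) :
    log (softmax x i) = x i - log (∑ j, exp (x j)) := by
  rw [softmax, log_div (exp_pos _).ne' (sum_exp_pos x).ne', log_exp]

theorem mul_negEntropy_softmax_div {α : ℝ} (hα : α ≠ 0) (q : ι → ℝ) :
    α * ∑ i, softmax (fun i => q i / α) i * log (softmax (fun i => q i / α) i)
      = ∑ i, q i * softmax (fun i => q i / α) i - α * log (∑ j, exp (q j / α)) := by
  set p := softmax (fun i => q i / α)
  have hlog : ∀ i, log (p i) = q i / α - log (∑ j, exp (q j / α)) := log_softmax (fun i => q i / α)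
  calc α * ∑ i, p i * log (p i)
      = ∑ i, q i * p i - α * log (∑ j, exp (q j / α)) * ∑ i, p i := by
        simp only [hlog, Finset.mul_sum, ← Finset.sum_sub_distrib]
        refine Finset.sum_congr rfl fun i _ => ?_
        field_simp
    _ = ∑ i, q i * p i - α * log (∑ j, exp (q j / α)) := by
        rw [sum_softmax, mul_one]

end Real

theorem stmt_19_general {k : ℕ} (hk : 0 < k) (α : ℝ) (hα : 0 < α)
    (Q : Set (Fin k → ℝ))
    (P : Fin k → ℝ)
    (qout : Fin k → ℝ)
    (Ppriv : Fin k → ℝ)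
    (hPpriv : Ppriv = fun i => Real.exp (qout i / α) / ∑ j, Real.exp (qout j / α))
    (H φα ψα : (Fin k → ℝ) → ℝ)
    (hH : H = fun D => ∑ i, D i * Real.log (D i))
    (hφα : φα = fun D => sSup ((fun q => ∑ i, q i * (P i - D i)) '' convexHull ℝ Q) + α * H D)
    (hψα : ψα = fun q => (∑ i, q i * P i) - α * Real.log (∑ j, Real.exp (q j / α)))
    (qtilde : Fin k → ℝ) (hqt : qtilde ∈ convexHull ℝ Q)
    (hqtmax : ∀ q ∈ convexHull ℝ Q,
      (∑ i, q i * (P i - Ppriv i)) ≤ ∑ i, qtilde i * (P i - Ppriv i)) :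
    φα Ppriv - ψα qout = (∑ i, (qtilde i - qout i) * (P i - Ppriv i)) ∧
      φα Ppriv - ψα qout ≤
        sSup ((fun q => ∑ i, (q i - qout i) * (P i - Ppriv i)) '' convexHull ℝ Q) := by
  have : Nonempty (Fin k) := Fin.pos_iff_nonempty.mp hk
  have hsub (q : Fin k → ℝ) : ∑ i, (q i - qout i) * (P i - Ppriv i)
      = ∑ i, q i * (P i - Ppriv i) - ∑ i, qout i * (P i - Ppriv i) := by
    simp only [sub_mul, Finset.sum_sub_distrib]
  have hentropy : α * H Ppriv = ∑ i, qout i * Ppriv i - α * log (∑ j, exp (qout j / α)) := by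
    subst hPpriv hH
    exact mul_negEntropy_softmax_div hα.ne' qout
  have hgap : φα Ppriv - ψα qout = ∑ i, (qtilde i - qout i) * (P i - Ppriv i) := by
    rw [hφα, hψα]
    dsimp only
    rw [csSup_image_eq_of_forall_le hqt hqtmax, hentropy, hsub]
    simp only [mul_sub, Finset.sum_sub_distrib]
    ring
  refine ⟨hgap, hgap.trans_le (le_of_eq ?_)⟩
  rw [csSup_image_eq_of_forall_le hqt]
  intro q hq
  rw [hsub, hsub]
  linarith [hqtmax q hq]

theorem stmt_19 {k : ℕ} (hk : 0 < k) (α : ℝ) (hα : 0 < α)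
    (Q : Set (Fin k → ℝ)) (hQne : Q.Nonempty) (hQcomp : IsCompact Q)
    (hQbdd : ∀ q ∈ Q, ∀ i, |q i| ≤ 1)
    (P : Fin k → ℝ) (hP : P ∈ stdSimplex ℝ (Fin k))
    (qout : Fin k → ℝ) (hqout : qout ∈ convexHull ℝ Q)
    (Ppriv : Fin k → ℝ)
    (hPpriv : Ppriv = fun i => Real.exp (qout i / α) / ∑ j, Real.exp (qout j / α))
    (H φα ψα : (Fin k → ℝ) → ℝ)
    (hH : H = fun D => ∑ i, D i * Real.log (D i))
    (hφα : φα = fun D => sSup ((fun q => ∑ i, q i * (P i - D i)) '' convexHull ℝ Q) + α * H D)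
    (hψα : ψα = fun q => (∑ i, q i * P i) - α * Real.log (∑ j, Real.exp (q j / α)))
    (qtilde : Fin k → ℝ) (hqt : qtilde ∈ convexHull ℝ Q)
    (hqtmax : ∀ q ∈ convexHull ℝ Q,
      (∑ i, q i * (P i - Ppriv i)) ≤ ∑ i, qtilde i * (P i - Ppriv i)) :
    φα Ppriv - ψα qout = (∑ i, (qtilde i - qout i) * (P i - Ppriv i)) ∧
      φα Ppriv - ψα qout ≤
        sSup ((fun q => ∑ i, (q i - qout i) * (P i - Ppriv i)) '' convexHull ℝ Q) :=
  stmt_19_general hk α hα Q P qout Ppriv hPpriv H φα ψα hH hφα hψα qtilde hqt hqtmax
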